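/- Let A be a unital K-algebra, S a subalgebra, and Θ: A → A⊗A an S-linear double derivation. Define Θ^e: A^e → trip(A) by Θ^e(a⊗b̄) = Θ(a)⊗b̄ + a⊗Θ^op(b̄). Then Θ^e is an S^e-linear derivation of the algebra A^e with values in the A^e-bimodule trip(A) (with its outer structure). -/
import Mathlib

set_option synthInstance.maxHeartbeats 1000000
set_option maxHeartbeats 2000000

open TensorProduct MulOpposite

noncomputable section

variable (K A : Type*) [Field K] [CharZero K] [Ring A] [Algebra K A]

/-- The enveloping algebra `Aᵉ = A ⊗ Aᵒᵖ`. -/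
abbrev Env := A ⊗[K] Aᵐᵒᵖ

/-- The triple of `A`: `trip(A) = ((A⊗A)⊗Aᵒᵖ) ⊕ (A⊗(Aᵒᵖ⊗Aᵒᵖ))` (a product of rings). -/
abbrev Trip := ((A ⊗[K] A) ⊗[K] Aᵐᵒᵖ) × (A ⊗[K] (Aᵐᵒᵖ ⊗[K] Aᵐᵒᵖ))

/-- `Θ ↦ Θᵒᵖ`, `Θᵒᵖ(ā) = Θ''(a)-bar ⊗ Θ'(a)-bar`. -/
def ddOp (Θ : A →ₗ[K] A ⊗[K] A) : Aᵐᵒᵖ →ₗ[K] Aᵐᵒᵖ ⊗[K] Aᵐᵒᵖ :=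
  ((TensorProduct.comm K Aᵐᵒᵖ Aᵐᵒᵖ).toLinearMap ∘ₗ
      TensorProduct.map (opLinearEquiv K).toLinearMap (opLinearEquiv K).toLinearMap) ∘ₗ
    Θ ∘ₗ (opLinearEquiv K (M := A)).symm.toLinearMap

/-- `Θᵉ : Aᵉ → trip(A)`, `a⊗b̄ ↦ Θ(a)⊗b̄ + a⊗Θᵒᵖ(b̄)`. -/
def thetaE (Θ : A →ₗ[K] A ⊗[K] A) : Env K A →ₗ[K] Trip K A :=
  (LinearMap.rTensor Aᵐᵒᵖ Θ).prod (LinearMap.lTensor A (ddOp K A Θ))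

/-- The embedding of `Aᵉ` into `trip(A)` implementing the outer left action:
`a⊗b̄ ↦ ((a⊗1)⊗b̄, a⊗(b̄⊗1))`; left outer action of `ξ` on `t` is `embL ξ * t`. -/
def embL : Env K A →ₗ[K] Trip K A :=
  (LinearMap.rTensor Aᵐᵒᵖ ((TensorProduct.mk K A A).flip 1)).prod
    (LinearMap.lTensor A ((TensorProduct.mk K Aᵐᵒᵖ Aᵐᵒᵖ).flip 1))

/-- The embedding of `Aᵉ` into `trip(A)` implementing the outer right action:
`a⊗b̄ ↦ ((1⊗a)⊗b̄, a⊗(1⊗b̄))`; right outer action of `ξ` on `t` is `t * embR ξ`. -/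
def embR : Env K A →ₗ[K] Trip K A :=
  (LinearMap.rTensor Aᵐᵒᵖ (TensorProduct.mk K A A 1)).prod
    (LinearMap.lTensor A (TensorProduct.mk K Aᵐᵒᵖ Aᵐᵒᵖ 1))

lemma sigma_mul_right (a : A) (t : A ⊗[K] A) :
    ((TensorProduct.comm K Aᵐᵒᵖ Aᵐᵒᵖ).toLinearMap ∘ₗ
      TensorProduct.map (opLinearEquiv K).toLinearMap (opLinearEquiv K).toLinearMap)
      (t * ((1 : A) ⊗ₜ[K] a)) =
    ((op a) ⊗ₜ[K] (1 : Aᵐᵒᵖ)) *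
      ((TensorProduct.comm K Aᵐᵒᵖ Aᵐᵒᵖ).toLinearMap ∘ₗ
        TensorProduct.map (opLinearEquiv K).toLinearMap (opLinearEquiv K).toLinearMap) t := by
  induction t using TensorProduct.induction_on with
  | zero => simp
  | tmul x y =>
      simp [Algebra.TensorProduct.tmul_mul_tmul, ← op_mul]
  | add x y hx hy =>
      simp only [add_mul, map_add, mul_add, LinearMap.comp_apply, LinearEquiv.coe_coe] at hx hy ⊢
      rw [hx, hy]

lemma sigma_mul_left (a : A) (t : A ⊗[K] A) :
    ((TensorProduct.comm K Aᵐᵒᵖ Aᵐᵒᵖ).toLinearMap ∘ₗ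
      TensorProduct.map (opLinearEquiv K).toLinearMap (opLinearEquiv K).toLinearMap)
      ((a ⊗ₜ[K] (1 : A)) * t) =
    ((TensorProduct.comm K Aᵐᵒᵖ Aᵐᵒᵖ).toLinearMap ∘ₗ
        TensorProduct.map (opLinearEquiv K).toLinearMap (opLinearEquiv K).toLinearMap) t *
      ((1 : Aᵐᵒᵖ) ⊗ₜ[K] (op a)) := by
  induction t using TensorProduct.induction_on with
  | zero => simp
  | tmul x y =>
      simp [Algebra.TensorProduct.tmul_mul_tmul, ← op_mul]
  | add x y hx hy =>
      simp only [add_mul, map_add, mul_add, LinearMap.comp_apply, LinearEquiv.coe_coe] at hx hy ⊢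
      rw [hx, hy]

lemma ddOp_apply (Θ : A →ₗ[K] A ⊗[K] A) (a : A) :
    ddOp K A Θ (op a) =
    ((TensorProduct.comm K Aᵐᵒᵖ Aᵐᵒᵖ).toLinearMap ∘ₗ
      TensorProduct.map (opLinearEquiv K).toLinearMap (opLinearEquiv K).toLinearMap) (Θ a) := by
  simp [ddOp]

lemma ddOp_der (Θ : A →ₗ[K] A ⊗[K] A)
    (hder : ∀ a b : A,
      Θ (a * b) = Θ a * ((1 : A) ⊗ₜ[K] b) + (a ⊗ₜ[K] (1 : A)) * Θ b)
    (x y : Aᵐᵒᵖ) :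
    ddOp K A Θ (x * y) =
      (x ⊗ₜ[K] (1 : Aᵐᵒᵖ)) * ddOp K A Θ y + ddOp K A Θ x * ((1 : Aᵐᵒᵖ) ⊗ₜ[K] y) := by
  induction x using MulOpposite.rec' with
  | h b =>
  induction y using MulOpposite.rec' with
  | h d =>
  have : op b * op d = op (d * b) := rfl
  rw [this, ddOp_apply, ddOp_apply, ddOp_apply, hder d b, map_add,
    sigma_mul_right, sigma_mul_left]

lemma trip_add_mul (x y z : Trip K A) : (x + y) * z = x * z + y * z := by
  apply Prod.ext <;> simp [HMul.hMul, Mul.mul]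

lemma trip_mul_add (x y z : Trip K A) : z * (x + y) = z * x + z * y := by
  apply Prod.ext <;> simp [HMul.hMul, Mul.mul]

lemma trip_zero_mul (x : Trip K A) : 0 * x = 0 := by
  apply Prod.ext <;> simp [HMul.hMul, Mul.mul]

lemma trip_mul_zero (x : Trip K A) : x * 0 = 0 := by
  apply Prod.ext <;> simp [HMul.hMul, Mul.mul]

lemma env_add_mul (x y z : Env K A) : (x + y) * z = x * z + y * z := by
  simp [HMul.hMul, Mul.mul]

lemma env_mul_add (x y z : Env K A) : z * (x + y) = z * x + z * y := by
  simp [HMul.hMul, Mul.mul]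

lemma env_zero_mul (x : Env K A) : 0 * x = 0 := by
  simp [HMul.hMul, Mul.mul]

lemma env_mul_zero (x : Env K A) : x * 0 = 0 := by
  simp [HMul.hMul, Mul.mul]

/-- If `Θ` is an `S`-linear double derivation on `A`, then
`Θᵉ(a⊗b̄) = Θ(a)⊗b̄ + a⊗Θᵒᵖ(b̄)` is an `Sᵉ`-linear derivation of the algebra `Aᵉ` with
values in the `Aᵉ`-bimodule `trip(A)` (outer structure). -/
theorem stmt7 (S : Subalgebra K A) (Θ : A →ₗ[K] A ⊗[K] A)
    (hder : ∀ a b : A,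
      Θ (a * b) = Θ a * ((1 : A) ⊗ₜ[K] b) + (a ⊗ₜ[K] (1 : A)) * Θ b)
    (hS : ∀ s ∈ S, Θ s = 0) :
    -- derivation property for the outer bimodule structure on `trip(A)`
    (∀ ξ η : Env K A,
      thetaE K A Θ (ξ * η) =
        embL K A ξ * thetaE K A Θ η + thetaE K A Θ ξ * embR K A η) ∧
    -- `Sᵉ`-linearity: `Θᵉ` vanishes on `Sᵉ = S ⊗ Sᵒᵖ`
    (∀ s ∈ S, ∀ t ∈ S, thetaE K A Θ (s ⊗ₜ[K] op t) = 0) := by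
  constructor
  · intro ξ η
    induction ξ using TensorProduct.induction_on with
    | zero =>
        simp only [env_zero_mul, map_zero, trip_zero_mul, add_zero]
    | add x y hx hy =>
        rw [env_add_mul, map_add, map_add, map_add, hx, hy, trip_add_mul, trip_add_mul]
        abel
    | tmul a b =>
      induction η using TensorProduct.induction_on with
      | zero =>
        simp only [env_mul_zero, map_zero, trip_mul_zero, add_zero]
      | add x y hx hy =>
        rw [env_mul_add, map_add, map_add, map_add, hx, hy, trip_mul_add, trip_mul_add]
        abel
      | tmul c d =>
        have hmul : (a ⊗ₜ[K] b) * (c ⊗ₜ[K] d) = (a * c) ⊗ₜ[K] (b * d) :=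
          Algebra.TensorProduct.tmul_mul_tmul ..
        rw [hmul]
        have h1 : thetaE K A Θ ((a * c) ⊗ₜ[K] (b * d)) =
            (Θ (a * c) ⊗ₜ[K] (b * d), (a * c) ⊗ₜ[K] ddOp K A Θ (b * d)) := rfl
        have h2 : thetaE K A Θ (c ⊗ₜ[K] d) =
            (Θ c ⊗ₜ[K] d, c ⊗ₜ[K] ddOp K A Θ d) := rfl
        have h3 : thetaE K A Θ (a ⊗ₜ[K] b) =
            (Θ a ⊗ₜ[K] b, a ⊗ₜ[K] ddOp K A Θ b) := rfl
        have h4 : embL K A (a ⊗ₜ[K] b) =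
            ((a ⊗ₜ[K] (1 : A)) ⊗ₜ[K] b, a ⊗ₜ[K] (b ⊗ₜ[K] (1 : Aᵐᵒᵖ))) := rfl
        have h5 : embR K A (c ⊗ₜ[K] d) =
            (((1 : A) ⊗ₜ[K] c) ⊗ₜ[K] d, c ⊗ₜ[K] ((1 : Aᵐᵒᵖ) ⊗ₜ[K] d)) := rfl
        rw [h1, h2, h3, h4, h5, hder a c, ddOp_der K A Θ hder b d]
        apply Prod.ext <;>
          simp [Algebra.TensorProduct.tmul_mul_tmul, TensorProduct.add_tmul,
            TensorProduct.tmul_add, add_comm]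
  · intro s hs t ht
    have h1 : thetaE K A Θ (s ⊗ₜ[K] op t) =
        (Θ s ⊗ₜ[K] op t, s ⊗ₜ[K] ddOp K A Θ (op t)) := rfl
    rw [h1, hS s hs, ddOp_apply, hS t ht]
    simp


end
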